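/- arXiv:math/0510375 — 2 statements merged into one kernel-verified Lean document; each statement's English description precedes it below -/
import Mathlib

section
/- Assume h(ū) ≠ 0, (ξ r₁)² ≠ 1, and ξ r₁ has finite multiplicative order N. Let N' = N if N is odd and N' = N/2 if N is even. Then for a positive integer n, h(n·ū) = 0 if and only if N' divides n. -/
/-!
Iterating the cocycle identity gives `h (n • u) * (r u - l u) = h u * (r u ^ n - l u ^ n)`.
The relation `ξ ^ 2 * r u * l u = 1` says `r u = (ξ * r u) ^ 2 * l u`, so `r u ≠ l u` and
`h (n • u) = 0` exactly when `((ξ * r u) ^ 2) ^ n = 1`, i.e. when the order of `(ξ * r u) ^ 2`,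
which is `N / gcd N 2`, divides `n`.
-/

section Cocycle

variable {G : Type*} [AddMonoid G]

theorem map_nsmul_eq_pow_of_map_add {M : Type*} [Monoid M] {l : G → M} (hl0 : l 0 = 1)
    (hladd : ∀ m n, l (m + n) = l m * l n) (u : G) (n : ℕ) : l (n • u) = l u ^ n := by
  induction n with
  | zero => simpa using hl0
  | succ n ih => rw [succ_nsmul, hladd, ih, pow_succ]

theorem cocycle_nsmul_mul_sub {K : Type*} [CommRing K] {r l h : G → K} (hl0 : l 0 = 1)
    (hladd : ∀ m n, l (m + n) = l m * l n) (hcoc : ∀ m n, h (m + n) = h m * r n + l m * h n)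
    (h0 : h 0 = 0) (u : G) (n : ℕ) :
    h (n • u) * (r u - l u) = h u * (r u ^ n - l u ^ n) := by
  induction n with
  | zero => simp [h0]
  | succ n ih =>
    rw [succ_nsmul, hcoc, map_nsmul_eq_pow_of_map_add hl0 hladd]
    linear_combination r u * ih

theorem cocycle_nsmul_eq_zero_iff {K : Type*} [Field K] {r l h : G → K} (hl0 : l 0 = 1)
    (hladd : ∀ m n, l (m + n) = l m * l n) (hcoc : ∀ m n, h (m + n) = h m * r n + l m * h n)
    (h0 : h 0 = 0) {u : G} (hhu : h u ≠ 0) (hrl : r u ≠ l u) (n : ℕ) :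
    h (n • u) = 0 ↔ r u ^ n = l u ^ n := by
  have key := cocycle_nsmul_mul_sub hl0 hladd hcoc h0 u n
  calc h (n • u) = 0 ↔ h (n • u) * (r u - l u) = 0 :=
        (mul_eq_zero_iff_right (sub_ne_zero.2 hrl)).symm
    _ ↔ r u ^ n - l u ^ n = 0 := by rw [key, mul_eq_zero_iff_left hhu]
    _ ↔ r u ^ n = l u ^ n := sub_eq_zero

end Cocycle

theorem pow_eq_pow_iff_of_eq_mul {M₀ : Type*} [CommGroupWithZero M₀] {a b c : M₀} (hb : b ≠ 0)
    (habc : a = c * b) (n : ℕ) : a ^ n = b ^ n ↔ c ^ n = 1 := by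
  rw [habc, mul_pow, mul_eq_right₀ (pow_ne_zero n hb)]

theorem Nat.div_gcd_two_eq (N : ℕ) : N / N.gcd 2 = if N % 2 = 0 then N / 2 else N := by
  split_ifs with hN
  · rw [Nat.gcd_eq_right (Nat.dvd_of_mod_eq_zero hN)]
  · rw [Nat.coprime_two_right.2 (Nat.odd_iff.2 (by omega)), Nat.div_one]

theorem stmt12_general {K : Type*} [Field K] {G : Type*} [AddGroup G]
    (r l h : G → K)
    (hl1 : l 0 = 1) (hladd : ∀ m n, l (m + n) = l m * l n)
    (hcoc : ∀ m n, h (m + n) = h m * r n + l m * h n)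
    (h0 : h 0 = 0)
    (u : G)
    (ξ : K) (hxirl : ξ ^ 2 * (r u * l u) = 1)
    (hhu : h u ≠ 0)
    (hsq : (ξ * r u) ^ 2 ≠ 1)
    (N : ℕ) (hord : orderOf (ξ * r u) = N) :
    ∀ n : ℕ, 0 < n →
      (h (n • u) = 0 ↔ (if N % 2 = 0 then N / 2 else N) ∣ n) := by
  intro n _
  have hl : l u ≠ 0 := right_ne_zero_of_mul (right_ne_zero_of_mul_eq_one hxirl)
  have hrq : r u = (ξ * r u) ^ 2 * l u := by linear_combination (-r u) * hxirl
  have hrl : r u ≠ l u := fun hEq => hsq ((mul_eq_right₀ hl).1 (hrq.symm.trans hEq))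
  rw [cocycle_nsmul_eq_zero_iff hl1 hladd hcoc h0 hhu hrl, pow_eq_pow_iff_of_eq_mul hl hrq,
    ← orderOf_dvd_iff_pow_eq_one, orderOf_pow' _ two_ne_zero, hord, Nat.div_gcd_two_eq]

theorem stmt12 {K : Type*} [Field K] {G : Type*} [AddGroup G]
    (r l h : G → K)
    (hr1 : r 0 = 1) (hradd : ∀ m n, r (m + n) = r m * r n) (hrne : ∀ m, r m ≠ 0)
    (hl1 : l 0 = 1) (hladd : ∀ m n, l (m + n) = l m * l n) (hlne : ∀ m, l m ≠ 0)
    (hcoc : ∀ m n, h (m + n) = h m * r n + l m * h n)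
    (h0 : h 0 = 0)
    (u : G) (hu : ∀ g : G, u + g = g + u)
    (ξ : K) (hξ : ξ ≠ 0) (hxirl : ξ ^ 2 * (r u * l u) = 1)
    (hhu : h u ≠ 0)
    (hsq : (ξ * r u) ^ 2 ≠ 1)
    (N : ℕ) (hN : 0 < N) (hord : orderOf (ξ * r u) = N) :
    ∀ n : ℕ, 0 < n →
      (h (n • u) = 0 ↔ (if N % 2 = 0 then N / 2 else N) ∣ n) :=
  stmt12_general r l h hl1 hladd hcoc h0 u ξ hxirl hhu hsq N hord
end

section
/- With the same setup and assumptions (h(ū) ≠ 0, ξ r₁ not a root of unity), for m₁ ∈ G with h(m₁ - ū) + ξ h(m₁) = 0 and any integer j ≥ 0, d(m₁ + j·ū) = 2j + 2, where d(m) is the least positive integer n with ∑_{k=0}^{n-1} ξ^{n-1-k} h(m - k·ū) = 0. -/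
/-!
Put `q = ξ r(ū)`. Since `ū` is central, comparing the cocycle identity for `m + ū` and `ū + m`
gives `h = c (r - l)` with `c = h(ū) / (r(ū) - l(ū))`; here `r(ū) ≠ l(ū)` because otherwise
`q² = ξ² r(ū) l(ū) = 1`. The condition on `m₁` then says `r(m₁) = q l(m₁)`, so that
`h(m₁ + t ū) = c l(m₁) ξ^{-t} (q^{t+1} - q^{-t})`. Summing, the `n`-th sum is a nonzero multiple
of `(q^{2j+2-n} - 1)(1 + q + ⋯ + q^{n-1})`, and as `q` is not a root of unity this vanishes
exactly for `n = 2j + 2`.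
-/

open Finset

lemma ne_zero_of_map_add_eq_mul {G M₀ : Type*} [AddGroup G] [MonoidWithZero M₀] [Nontrivial M₀]
    {f : G → M₀} (hf0 : f 0 = 1) (hf : ∀ m n, f (m + n) = f m * f n) (m : G) : f m ≠ 0 :=
  ((⟨f, hf0, hf⟩ : AddChar G M₀).val_isUnit m).ne_zero

lemma map_add_zsmul_of_map_add_eq_mul {G M : Type*} [AddGroup G] [DivisionMonoid M]
    {f : G → M} (hf0 : f 0 = 1) (hf : ∀ m n, f (m + n) = f m * f n) (m u : G) (t : ℤ) :
    f (m + t • u) = f m * f u ^ t :=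
  let ψ : AddChar G M := ⟨f, hf0, hf⟩
  (ψ.map_add_eq_mul m (t • u)).trans (congrArg (f m * ·) (ψ.map_zsmul_eq_zpow t u))

lemma sum_range_zpow_sub {K : Type*} [Field K] {q : K} (hq : q ≠ 0) (a : ℤ) (n : ℕ) :
    ∑ k ∈ range n, q ^ (a - k) = q ^ (a + 1 - n) * ∑ k ∈ range n, q ^ k := by
  rw [mul_sum, ← sum_range_reflect]
  refine sum_congr rfl fun k hk => ?_
  rw [← zpow_natCast, ← zpow_add₀ hq]
  congr 1
  have := mem_range.mp hk
  omega

section NotRootOfUnity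

variable {K : Type*} [Field K] {q : K}

lemma geom_sum_ne_zero_of_zpow_ne_one (hq : ∀ k : ℤ, k ≠ 0 → q ^ k ≠ 1) {n : ℕ} (hn : n ≠ 0) :
    ∑ k ∈ range n, q ^ k ≠ 0 := by
  intro h
  have := geom_sum_mul q n
  rw [h, zero_mul, eq_comm, sub_eq_zero] at this
  exact hq n (by exact_mod_cast hn) (by exact_mod_cast this)

lemma zpow_sub_one_mul_geom_sum_eq_zero_iff (hq : ∀ k : ℤ, k ≠ 0 → q ^ k ≠ 1) {n : ℕ}
    (hn : n ≠ 0) (a : ℤ) : (q ^ (a - n) - 1) * ∑ k ∈ range n, q ^ k = 0 ↔ (n : ℤ) = a := by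
  rw [mul_eq_zero, or_iff_left (geom_sum_ne_zero_of_zpow_ne_one hq hn), sub_eq_zero]
  refine ⟨fun h => ?_, fun h => by rw [h, sub_self, zpow_zero]⟩
  by_contra hne
  exact hq _ (sub_ne_zero.mpr (Ne.symm hne)) h

lemma setOf_mul_zpow_sub_one_mul_geom_sum_eq_zero (hq : ∀ k : ℤ, k ≠ 0 → q ^ k ≠ 1)
    {C : ℕ → K} (hC : ∀ n, C n ≠ 0) {m : ℕ} (hm : 0 < m) :
    {n : ℕ | 0 < n ∧ C n * ((q ^ ((m : ℤ) - n) - 1) * ∑ k ∈ range n, q ^ k) = 0} = {m} := by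
  ext n
  simp only [Set.mem_ofPred_eq, Set.mem_singleton_iff]
  constructor
  · rintro ⟨hn, hz⟩
    exact_mod_cast (zpow_sub_one_mul_geom_sum_eq_zero_iff hq hn.ne' m).mp
      ((mul_eq_zero.mp hz).resolve_left (hC n))
  · rintro rfl
    exact ⟨hm, by rw [(zpow_sub_one_mul_geom_sum_eq_zero_iff hq hm.ne' n).mpr rfl, mul_zero]⟩

end NotRootOfUnity

lemma sum_pow_mul_zpow_sub_zpow {K : Type*} [Field K] {ξ q : K} (hξ : ξ ≠ 0) (hq : q ≠ 0)
    (j n : ℕ) :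
    ∑ k ∈ range n, ξ ^ (n - 1 - k) *
        (ξ ^ (-((j : ℤ) - k)) * (q ^ ((j : ℤ) - k + 1) - q ^ (-((j : ℤ) - k)))) =
      ξ ^ ((n : ℤ) - 1 - j) * q ^ (-(j : ℤ)) *
        ((q ^ (((2 * j + 2 : ℕ) : ℤ) - n) - 1) * ∑ k ∈ range n, q ^ k) := by
  have hterm : ∀ k ∈ range n, ξ ^ (n - 1 - k) *
      (ξ ^ (-((j : ℤ) - k)) * (q ^ ((j : ℤ) - k + 1) - q ^ (-((j : ℤ) - k)))) =
        ξ ^ ((n : ℤ) - 1 - j) * q ^ (-(j : ℤ)) * (q ^ (2 * (j : ℤ) + 1 - k) - q ^ k) := by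
    intro k hk
    have hkn := mem_range.mp hk
    have hξk : ξ ^ (n - 1 - k) * ξ ^ (-((j : ℤ) - k)) = ξ ^ ((n : ℤ) - 1 - j) := by
      rw [← zpow_natCast, ← zpow_add₀ hξ]
      congr 1
      omega
    have hq₁ : q ^ ((j : ℤ) - k + 1) = q ^ (-(j : ℤ)) * q ^ (2 * (j : ℤ) + 1 - k) := by
      rw [← zpow_add₀ hq]
      ring_nf
    have hq₂ : q ^ (-((j : ℤ) - k)) = q ^ (-(j : ℤ)) * q ^ k := by
      rw [← zpow_natCast, ← zpow_add₀ hq]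
      ring_nf
    rw [hq₁, hq₂, ← hξk]
    ring
  rw [sum_congr rfl hterm, ← mul_sum, sum_sub_distrib, sum_range_zpow_sub hq,
    show 2 * (j : ℤ) + 1 + 1 = ((2 * j + 2 : ℕ) : ℤ) by push_cast; ring]
  ring

section Cocycle

variable {K G : Type*} [Field K] [AddGroup G] {r l h : G → K}

lemma cocycle_mul_sub_eq_of_add_comm (hcoc : ∀ m n, h (m + n) = h m * r n + l m * h n)
    {m u : G} (hmu : m + u = u + m) : h m * (r u - l u) = h u * (r m - l m) := by
  have := hcoc u m
  rw [← hmu] at this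
  linear_combination this - hcoc m u

lemma cocycle_eq_div_mul_sub (hcoc : ∀ m n, h (m + n) = h m * r n + l m * h n) {u : G}
    (hu : ∀ g, u + g = g + u) (hrl : r u ≠ l u) (m : G) :
    h m = h u / (r u - l u) * (r m - l m) := by
  rw [div_mul_eq_mul_div, eq_div_iff (sub_ne_zero.mpr hrl),
    cocycle_mul_sub_eq_of_add_comm hcoc (hu m).symm]

lemma map_eq_mul_map_of_cocycle_sub_add_mul_eq_zero (hradd : ∀ m n, r (m + n) = r m * r n)
    (hladd : ∀ m n, l (m + n) = l m * l n) {c : K} (hc : c ≠ 0)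
    (hform : ∀ m, h m = c * (r m - l m)) {u m : G} {ξ : K} (hxirl : ξ ^ 2 * (r u * l u) = 1)
    (hq1 : 1 + ξ * r u ≠ 0) (hm : h (m - u) + ξ * h m = 0) : r m = ξ * r u * l m := by
  have hr := hradd (m - u) u
  have hl := hladd (m - u) u
  rw [sub_add_cancel] at hr hl
  rw [hform, hform m] at hm
  have hA : r (m - u) - l (m - u) + ξ * (r m - l m) = 0 :=
    (mul_eq_zero.mp (by linear_combination hm)).resolve_left hc
  -- after multiplying by `r u`, the relation factors as `(1 + ξ r u) (r m - ξ r u l m) = 0`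
  refine sub_eq_zero.mp ((mul_eq_zero.mp ?_).resolve_left hq1)
  linear_combination r u * hA + hr - r u * l (m - u) * hxirl - ξ ^ 2 * r u ^ 2 * hl

lemma cocycle_add_zsmul_eq (hr1 : r 0 = 1) (hradd : ∀ m n, r (m + n) = r m * r n)
    (hl1 : l 0 = 1) (hladd : ∀ m n, l (m + n) = l m * l n) {c : K}
    (hform : ∀ m, h m = c * (r m - l m)) {u m : G} {ξ : K} (hξ : ξ ≠ 0)
    (hxirl : ξ ^ 2 * (r u * l u) = 1) (hm : r m = ξ * r u * l m) (t : ℤ) :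
    h (m + t • u) = c * l m * (ξ ^ (-t) * ((ξ * r u) ^ (t + 1) - (ξ * r u) ^ (-t))) := by
  have hru := ne_zero_of_map_add_eq_mul hr1 hradd u
  obtain ⟨q, hqdef⟩ : ∃ q, q = ξ * r u := ⟨_, rfl⟩
  have hq : q ≠ 0 := hqdef ▸ mul_ne_zero hξ hru
  have hr : r u = ξ⁻¹ * q := by rw [hqdef]; field_simp
  have hl : l u = ξ⁻¹ * q⁻¹ := by
    rw [hqdef]
    field_simp
    linear_combination hxirl
  rw [← hqdef] at hm ⊢
  rw [hform, map_add_zsmul_of_map_add_eq_mul hr1 hradd, map_add_zsmul_of_map_add_eq_mul hl1 hladd,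
    hm, hr, hl, mul_zpow, mul_zpow, inv_zpow', inv_zpow', zpow_add_one₀ hq]
  ring

end Cocycle

theorem stmt15_general {K : Type*} [Field K] {G : Type*} [AddGroup G]
    (r l h : G → K)
    (hr1 : r 0 = 1) (hradd : ∀ m n, r (m + n) = r m * r n)
    (hl1 : l 0 = 1) (hladd : ∀ m n, l (m + n) = l m * l n)
    (hcoc : ∀ m n, h (m + n) = h m * r n + l m * h n)
    (u : G) (hu : ∀ g : G, u + g = g + u)
    (ξ : K) (hξ : ξ ≠ 0) (hxirl : ξ ^ 2 * (r u * l u) = 1)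
    (hhu : h u ≠ 0)
    (hroot : ∀ k : ℤ, k ≠ 0 → (ξ * r u) ^ k ≠ 1)
    (m1 : G) (hm1 : h (m1 - u) + ξ * h m1 = 0) :
    ∀ j : ℕ,
      IsLeast {n : ℕ | 0 < n ∧
        ∑ k ∈ Finset.range n, ξ ^ (n - 1 - k) * h (m1 + j • u - k • u) = 0} (2 * j + 2) := by
  intro j
  have hq0 : ξ * r u ≠ 0 := mul_ne_zero hξ (ne_zero_of_map_add_eq_mul hr1 hradd u)
  have hq2 : (ξ * r u) ^ 2 ≠ 1 := by exact_mod_cast hroot 2 two_ne_zero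
  have hrl : r u ≠ l u := fun e => hq2 (by linear_combination hxirl + ξ ^ 2 * r u * e)
  have hc : h u / (r u - l u) ≠ 0 := div_ne_zero hhu (sub_ne_zero.mpr hrl)
  have hform := cocycle_eq_div_mul_sub hcoc hu hrl
  have hrm1 := map_eq_mul_map_of_cocycle_sub_add_mul_eq_zero hradd hladd hc hform hxirl
    (fun e => hq2 (by linear_combination (ξ * r u - 1) * e)) hm1
  have hsum : ∀ n : ℕ, ∑ k ∈ range n, ξ ^ (n - 1 - k) * h (m1 + j • u - k • u) =
      h u / (r u - l u) * l m1 * (ξ ^ ((n : ℤ) - 1 - j) * (ξ * r u) ^ (-(j : ℤ))) *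
        (((ξ * r u) ^ (((2 * j + 2 : ℕ) : ℤ) - n) - 1) * ∑ k ∈ range n, (ξ * r u) ^ k) := by
    intro n
    rw [mul_assoc, ← sum_pow_mul_zpow_sub_zpow hξ hq0, mul_sum]
    refine sum_congr rfl fun k _ => ?_
    have hidx : m1 + j • u - k • u = m1 + ((j : ℤ) - k) • u := by
      rw [sub_zsmul, natCast_zsmul, natCast_zsmul, add_sub_assoc, sub_eq_add_neg]
    rw [hidx, cocycle_add_zsmul_eq hr1 hradd hl1 hladd hform hξ hxirl hrm1]
    ring
  simp only [hsum]
  rw [setOf_mul_zpow_sub_one_mul_geom_sum_eq_zero hroot ?_ (by omega)]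
  · exact isLeast_singleton
  · exact fun _ => mul_ne_zero (mul_ne_zero hc (ne_zero_of_map_add_eq_mul hl1 hladd m1))
      (mul_ne_zero (zpow_ne_zero _ hξ) (zpow_ne_zero _ hq0))

theorem stmt15 {K : Type*} [Field K] {G : Type*} [AddGroup G]
    (r l h : G → K)
    (hr1 : r 0 = 1) (hradd : ∀ m n, r (m + n) = r m * r n) (hrne : ∀ m, r m ≠ 0)
    (hl1 : l 0 = 1) (hladd : ∀ m n, l (m + n) = l m * l n) (hlne : ∀ m, l m ≠ 0)
    (hcoc : ∀ m n, h (m + n) = h m * r n + l m * h n)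
    (h0 : h 0 = 0)
    (u : G) (hu : ∀ g : G, u + g = g + u)
    (ξ : K) (hξ : ξ ≠ 0) (hxirl : ξ ^ 2 * (r u * l u) = 1)
    (hhu : h u ≠ 0)
    (hroot : ∀ k : ℤ, k ≠ 0 → (ξ * r u) ^ k ≠ 1)
    (m1 : G) (hm1 : h (m1 - u) + ξ * h m1 = 0) :
    ∀ j : ℕ,
      IsLeast {n : ℕ | 0 < n ∧
        ∑ k ∈ Finset.range n, ξ ^ (n - 1 - k) * h (m1 + j • u - k • u) = 0} (2 * j + 2) :=
  stmt15_general r l h hr1 hradd hl1 hladd hcoc u hu ξ hξ hxirl hhu hroot m1 hm1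
end
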